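/- arXiv:2501.04282 — 2 statements merged into one kernel-verified Lean document; each statement's English description precedes it below -/
import Mathlib

section
/- In the mapping class group of the four-holed sphere Σ₀⁴, with d'_1, d'_2 the two simple closed curves of Lemma 7.3 and d'_{2k+i} = (κ'')^k(d'_i) for i,k ∈ {1,2} where κ'' is the 2π/3-rotation, one has t_{d'_1}² t_{d'_2}² ⋯ t_{d'_6}² = t_{δ₁}⁴ t_{δ₂}⁴ t_{δ₃}⁴ t_{δ₄}⁴, where δ₁,…,δ₄ are the boundary-parallel curves; moreover this follows formally from the four lantern relations t_{d'_1}t_{d'_2}t_{d'_6} = t_{d'_2}t_{d'_3}t_{d'_4} = t_{d'_4}t_{d'_5}t_{d'_6} = t_{d'_2}t_{d'_4}t_{d'_6} = t_{δ₁}t_{δ₂}t_{δ₃}t_{δ₄} together with the fact that each t_{δ_i} is central. -/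
/-!
With `Δ = x₂x₄x₆` central, comparing each of the other three lantern relations with the fourth
shows that `x₁, x₃, x₅` are conjugates of `x₄, x₆, x₂`, respectively; e.g. `x₁x₂x₆ = x₂x₄x₆` gives
`x₁ = x₂x₄x₂⁻¹`. Writing `a, b, c = x₂, x₄, x₆`, the left-hand side becomes
`(ab)(ba)(bc)(cb)(ca)(ac)`, and since `ab = Δc⁻¹`, `bc = Δa⁻¹`, `ca = Δb⁻¹` by centrality, this is
`Δ³ · c⁻¹(bca)c = Δ⁴`.
-/

open Subgroup

section

variable {G : Type*} [Group G]

theorem mul_mul_rotate_of_mem_center {a b c : G} (h : a * b * c ∈ center G) :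
    b * c * a = a * b * c := by
  calc b * c * a = a⁻¹ * (a * b * c) * a := by group
    _ = a * b * c := by rw [mul_assoc, ← mem_center_iff.mp h, inv_mul_cancel_left]

theorem conj_sq_mul_sq_eq_pow_four {a b c Δ : G} (hΔ : Δ ∈ center G) (h : a * b * c = Δ) :
    (a * b * a⁻¹) ^ 2 * a ^ 2 * (b * c * b⁻¹) ^ 2 * b ^ 2 * (c * a * c⁻¹) ^ 2 * c ^ 2
      = Δ ^ 4 := by
  have hbca : b * c * a = Δ := (mul_mul_rotate_of_mem_center (h ▸ hΔ)).trans h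
  have hcab : c * a * b = Δ := (mul_mul_rotate_of_mem_center (hbca ▸ hΔ)).trans hbca
  have hR : ∀ g, g * Δ = Δ * g := mem_center_iff.mp hΔ
  have hL : ∀ g k, g * (Δ * k) = Δ * (g * k) := fun g k => by rw [← mul_assoc, hR, mul_assoc]
  have hab : a * b = Δ * c⁻¹ := by rw [← h]; group
  have hbc : b * c = Δ * a⁻¹ := by rw [← hbca]; group
  have hca : c * a = Δ * b⁻¹ := by rw [← hcab]; group
  calc
    _ = (a * b) * (b * a) * (b * c) * (c * b) * (c * a) * (a * c) := by
      simp only [sq]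
      group
    _ = (Δ * c⁻¹) * (b * a) * (Δ * a⁻¹) * (c * b) * (Δ * b⁻¹) * (a * c) := by
      rw [hab, hbc, hca]
    _ = Δ * Δ * Δ * (c⁻¹ * (b * c * a) * c) := by
      simp only [mul_assoc, hL]
      group
    _ = Δ ^ 4 := by
      rw [hbca, mul_assoc c⁻¹, ← hR c, inv_mul_cancel_left]
      simp only [pow_succ, pow_zero, one_mul]

end

/-- Lemma 7.3: in the mapping class group of the four-holed sphere `Σ₀⁴`, writing
`x_i = t_{d'_i}` for the Dehn twists along the six curves `d'_1,…,d'_6` and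
`d_j = t_{δ_j}` for the (central) boundary twists, the four lantern relations
`x₁x₂x₆ = x₂x₃x₄ = x₄x₅x₆ = x₂x₄x₆ = d₁d₂d₃d₄` formally imply
`t_{d'_1}² ⋯ t_{d'_6}² = t_{δ₁}⁴ t_{δ₂}⁴ t_{δ₃}⁴ t_{δ₄}⁴`. -/
theorem lantern_consequence {G : Type*} [Group G]
    (x1 x2 x3 x4 x5 x6 d1 d2 d3 d4 : G)
    (hd1 : ∀ g : G, d1 * g = g * d1) (hd2 : ∀ g : G, d2 * g = g * d2)
    (hd3 : ∀ g : G, d3 * g = g * d3) (hd4 : ∀ g : G, d4 * g = g * d4)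
    (h1 : x1 * x2 * x6 = d1 * d2 * d3 * d4)
    (h2 : x2 * x3 * x4 = d1 * d2 * d3 * d4)
    (h3 : x4 * x5 * x6 = d1 * d2 * d3 * d4)
    (h4 : x2 * x4 * x6 = d1 * d2 * d3 * d4) :
    x1 ^ 2 * x2 ^ 2 * x3 ^ 2 * x4 ^ 2 * x5 ^ 2 * x6 ^ 2
      = d1 ^ 4 * d2 ^ 4 * d3 ^ 4 * d4 ^ 4 := by
  have hmem : ∀ d : G, (∀ g, d * g = g * d) → d ∈ center G :=
    fun d hd => mem_center_iff.mpr fun g => (hd g).symm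
  have hcenter : x2 * x4 * x6 ∈ center G :=
    h4 ▸ mul_mem (mul_mem (mul_mem (hmem d1 hd1) (hmem d2 hd2)) (hmem d3 hd3)) (hmem d4 hd4)
  have hx1 : x1 = x2 * x4 * x2⁻¹ :=
    eq_mul_inv_of_mul_eq (mul_right_cancel (h1.trans h4.symm))
  have hx3 : x3 = x4 * x6 * x4⁻¹ :=
    eq_mul_inv_of_mul_eq (by simpa only [mul_assoc, mul_right_inj] using h2.trans h4.symm)
  have hx5 : x5 = x6 * x2 * x6⁻¹ := by
    refine eq_mul_inv_of_mul_eq ?_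
    simpa only [mul_assoc, mul_right_inj] using
      h3.trans (h4.symm.trans (mul_mul_rotate_of_mem_center hcenter).symm)
  have hpow : d1 ^ 4 * d2 ^ 4 * d3 ^ 4 * d4 ^ 4 = (d1 * d2 * d3 * d4) ^ 4 := by
    rw [(Commute.mul_left (Commute.mul_left (hd1 d4) (hd2 d4)) (hd3 d4)).mul_pow,
      (Commute.mul_left (hd1 d3) (hd2 d3)).mul_pow, Commute.mul_pow (hd1 d2)]
  rw [hx1, hx3, hx5, hpow]
  exact conj_sq_mul_sq_eq_pow_four (h4 ▸ hcenter) h4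
end

section
/- Let G be a group, Δ a central element, and x₁,…,x₆ ∈ G satisfying x₁x₂x₆ = x₂x₃x₄ = x₄x₅x₆ = x₂x₄x₆ = Δ. Then x₁²x₂²x₃²x₄²x₅²x₆² = Δ⁴. -/
/-!
Comparing each relation with `x₂x₄x₆ = Δ` shows that `x₂` conjugates `x₄` to `x₁` and `x₄`
conjugates `x₆` to `x₃` and `x₅` to `x₂`. Sliding the squares through these conjugations turns
the product into the word `a b² a b c² a² b c²` in `a, b, c = x₂, x₄, x₆`, which contains
`abc` twice and, after the two central factors are pulled out, its rotation `bca` once.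
-/

theorem mul_mul_rotate_of_central {G : Type*} [Group G] {Δ a b c : G}
    (hΔ : ∀ g : G, Δ * g = g * Δ) (h : a * b * c = Δ) : b * c * a = Δ := by
  rw [← mul_left_cancel_iff (a := a), ← mul_assoc, ← mul_assoc, h, hΔ]

theorem word_eq_pow_four_of_mul_mul_eq_central {G : Type*} [Group G] {Δ a b c : G}
    (hΔ : ∀ g : G, Δ * g = g * Δ) (h : a * b * c = Δ) :
    a * b ^ 2 * a * b * c ^ 2 * a ^ 2 * b * c ^ 2 = Δ ^ 4 := by
  have hmove : ∀ x y : G, x * (Δ * y) = Δ * (x * y) := fun x y => by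
    rw [← mul_assoc, ← hΔ, mul_assoc]
  calc a * b ^ 2 * a * b * c ^ 2 * a ^ 2 * b * c ^ 2
      = a * b * b * (a * b * c) * c * a * (a * b * c) * c := by simp only [sq, mul_assoc]
    _ = Δ * Δ * (a * b * (b * c * a) * c) := by simp only [h, mul_assoc, hmove]
    _ = Δ * Δ * Δ * (a * b * c) := by
        simp only [mul_mul_rotate_of_central hΔ h, mul_assoc, hmove]
    _ = Δ ^ 4 := by rw [h, pow_succ, pow_succ, sq]

/-- The group-theoretic core of Lemma 7.3: if `Δ` is a central element of a group `G`
and `x₁,…,x₆ ∈ G` satisfy the four lantern relations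
`x₁x₂x₆ = x₂x₃x₄ = x₄x₅x₆ = x₂x₄x₆ = Δ`, then
`x₁²x₂²x₃²x₄²x₅²x₆² = Δ⁴`. -/
theorem lantern_core {G : Type*} [Group G] (Δ x1 x2 x3 x4 x5 x6 : G)
    (hΔ : ∀ g : G, Δ * g = g * Δ)
    (h1 : x1 * x2 * x6 = Δ) (h2 : x2 * x3 * x4 = Δ)
    (h3 : x4 * x5 * x6 = Δ) (h4 : x2 * x4 * x6 = Δ) :
    x1 ^ 2 * x2 ^ 2 * x3 ^ 2 * x4 ^ 2 * x5 ^ 2 * x6 ^ 2 = Δ ^ 4 := by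
  have conj_x1 : SemiconjBy x2 x4 x1 := mul_right_cancel (h4.trans h1.symm)
  have conj_x3 : SemiconjBy x4 x6 x3 :=
    mul_left_cancel (a := x2) (by rw [← mul_assoc, ← mul_assoc, h4, h2])
  have conj_x5 : SemiconjBy x4 x5 x2 := mul_right_cancel (h3.trans h4.symm)
  calc x1 ^ 2 * x2 ^ 2 * x3 ^ 2 * x4 ^ 2 * x5 ^ 2 * x6 ^ 2
      = x1 ^ 2 * x2 * x2 * (x3 ^ 2 * x4) * (x4 * x5 ^ 2) * x6 ^ 2 := by
        simp only [sq, mul_assoc]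
    _ = x2 * x4 ^ 2 * x2 * (x4 * x6 ^ 2) * (x2 ^ 2 * x4) * x6 ^ 2 := by
        rw [← (conj_x1.pow_right 2).eq, ← (conj_x3.pow_right 2).eq, (conj_x5.pow_right 2).eq]
    _ = x2 * x4 ^ 2 * x2 * x4 * x6 ^ 2 * x2 ^ 2 * x4 * x6 ^ 2 := by simp only [mul_assoc]
    _ = Δ ^ 4 := word_eq_pow_four_of_mul_mul_eq_central hΔ h4
end
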